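/- arXiv:1601.06723 — 2 statements merged into one kernel-verified Lean document; each statement's English description precedes it below -/
import Mathlib

section
/- For positive definite operators A (matrices) and arbitrary matrix K, the map (A, K) ↦ K* A⁻¹ K is jointly convex: for λ ∈ [0,1], (λK₁+(1-λ)K₂)* (λA₁+(1-λ)A₂)⁻¹ (λK₁+(1-λ)K₂) ≤ λ K₁* A₁⁻¹ K₁ + (1-λ) K₂* A₂⁻¹ K₂ in the Loewner order. -/
open Matrix
open scoped ComplexOrder Classical

/-- Square root of a positive semidefinite matrix, extended by `0`. -/
noncomputable def msqrt {n : Type*} [Fintype n] [DecidableEq n] (A : Matrix n n ℂ) :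
    Matrix n n ℂ :=
  if h : A.PosSemidef then
    h.1.eigenvectorUnitary.1 * diagonal ((↑) ∘ (√·) ∘ h.1.eigenvalues) *
      (star h.1.eigenvectorUnitary : Matrix n n ℂ)
  else 0

/-- Real power of a Hermitian matrix via the functional calculus, extended by `0`. -/
noncomputable def mrpow {n : Type*} [Fintype n] [DecidableEq n] (A : Matrix n n ℂ) (α : ℝ) :
    Matrix n n ℂ :=
  if h : A.IsHermitian then h.cfc (fun t => t ^ α) else 0

/-- A completely positive linear map between matrix algebras (Choi–Kraus form). -/
def IsCPMap {n m : Type*} [Fintype n] [Fintype m] (Φ : Matrix n n ℂ → Matrix m m ℂ) : Prop :=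
  ∃ (r : ℕ) (C : Fin r → Matrix n m ℂ), ∀ X, Φ X = ∑ i, (C i)ᴴ * X * C i

/-- The matrix geometric mean `A^{1/2} (A^{-1/2} B A^{-1/2})^{1/2} A^{1/2}`. -/
noncomputable def geomMean {n : Type*} [Fintype n] [DecidableEq n] (A B : Matrix n n ℂ) :
    Matrix n n ℂ :=
  msqrt A * msqrt ((msqrt A)⁻¹ * B * (msqrt A)⁻¹) * msqrt A

/-- The weighted geometric mean `B^{1/2} (B^{-1/2} A B^{-1/2})^α B^{1/2}`. -/
noncomputable def wgeomMean {n : Type*} [Fintype n] [DecidableEq n] (α : ℝ)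
    (A B : Matrix n n ℂ) : Matrix n n ℂ :=
  msqrt B * mrpow ((msqrt B)⁻¹ * A * (msqrt B)⁻¹) α * msqrt B

/-- The harmonic mean `2 (A⁻¹ + B⁻¹)⁻¹`. -/
noncomputable def harmMean {n : Type*} [Fintype n] [DecidableEq n] (A B : Matrix n n ℂ) :
    Matrix n n ℂ :=
  (2 : ℂ) • (A⁻¹ + B⁻¹)⁻¹

/-!
For positive definite `A` the block matrix `[[A, K], [Kᴴ, Kᴴ A⁻¹ K]]` is positive semidefinite,
its Schur complement being `0`. Such blocks depend linearly on `(A, K, Kᴴ A⁻¹ K)`, so the convex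
combination of two of them is `[[A, K], [Kᴴ, D]]` with `A`, `K` the combined matrices and `D` the
combination of the `Kᴴ A⁻¹ K`. It is still positive semidefinite, hence so is its Schur complement
`D - Kᴴ A⁻¹ K`.
-/

namespace Matrix

variable {𝕜 m n : Type*} [RCLike 𝕜]

lemma PosDef.posSemidef_fromBlocks_conjTranspose_mul_inv_mul [Fintype m] [DecidableEq m]
    [Finite n] {A : Matrix m m 𝕜} (hA : A.PosDef) (B : Matrix m n 𝕜) :
    (fromBlocks A B Bᴴ (Bᴴ * A⁻¹ * B)).PosSemidef := by
  have := hA.isUnit.invertible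
  rw [PosDef.fromBlocks₁₁ _ _ hA, sub_self]
  exact .zero

lemma PosDef.ofReal_smul_add_one_sub_smul {A₁ A₂ : Matrix m m 𝕜} (hA₁ : A₁.PosDef)
    (hA₂ : A₂.PosDef) {l : ℝ} (hl0 : 0 ≤ l) (hl1 : l ≤ 1) :
    ((l : 𝕜) • A₁ + (1 - (l : 𝕜)) • A₂).PosDef := by
  rcases hl1.lt_or_eq with hl1 | rfl
  · have h1l : (0 : 𝕜) < 1 - l := by
      rw [sub_pos, ← RCLike.ofReal_one, RCLike.ofReal_lt_ofReal]; exact hl1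
    exact .posSemidef_add (hA₁.posSemidef.smul (RCLike.ofReal_nonneg.mpr hl0)) (hA₂.smul h1l)
  · simpa using hA₁

end Matrix

/-- Lieb–Ruskai convexity: `(A, K) ↦ K* A⁻¹ K` is jointly convex. -/
theorem lieb_ruskai_convexity {n : Type*} [Fintype n] [DecidableEq n]
    (A₁ A₂ K₁ K₂ : Matrix n n ℂ) (hA₁ : A₁.PosDef) (hA₂ : A₂.PosDef)
    (l : ℝ) (hl0 : 0 ≤ l) (hl1 : l ≤ 1) :
    (((l : ℂ) • (K₁ᴴ * A₁⁻¹ * K₁) + (1 - (l : ℂ)) • (K₂ᴴ * A₂⁻¹ * K₂)) -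
      ((l : ℂ) • K₁ + (1 - (l : ℂ)) • K₂)ᴴ *
        ((l : ℂ) • A₁ + (1 - (l : ℂ)) • A₂)⁻¹ *
        ((l : ℂ) • K₁ + (1 - (l : ℂ)) • K₂)).PosSemidef := by
  have hl : (0 : ℂ) ≤ l := Complex.zero_le_real.mpr hl0
  have h1l : (0 : ℂ) ≤ 1 - l := by
    rw [sub_nonneg, ← Complex.ofReal_one, Complex.real_le_real]; exact hl1
  have hA := PosDef.ofReal_smul_add_one_sub_smul hA₁ hA₂ hl0 hl1
  have := hA.isUnit.invertible
  have hblocks := ((hA₁.posSemidef_fromBlocks_conjTranspose_mul_inv_mul K₁).smul hl).add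
    ((hA₂.posSemidef_fromBlocks_conjTranspose_mul_inv_mul K₂).smul h1l)
  have hK : ((l : ℂ) • K₁ + (1 - (l : ℂ)) • K₂)ᴴ = (l : ℂ) • K₁ᴴ + (1 - (l : ℂ)) • K₂ᴴ := by
    simp
  rw [fromBlocks_smul, fromBlocks_smul, fromBlocks_add, ← hK] at hblocks
  exact (PosDef.fromBlocks₁₁ _ _ hA).mp hblocks
end

section
/- The harmonic mean H(A,B) = 2(A⁻¹+B⁻¹)⁻¹ of positive definite matrices is jointly concave: H(λA₁+(1-λ)A₂, λB₁+(1-λ)B₂) ≥ λH(A₁,B₁) + (1-λ)H(A₂,B₂). -/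
open Matrix
open scoped ComplexOrder Classical

/-! The harmonic mean is `2 (A - A (A + B)⁻¹ A)`, i.e. linear minus the map `(X, M) ↦ Xᴴ M⁻¹ X`
evaluated at `(A, A + B)`. That map is jointly convex: by the Schur complement criterion,
`Xᴴ M⁻¹ X` is the least `D` making `[M X; Xᴴ D]` positive semidefinite, and such block
matrices form a convex cone. -/

namespace Matrix

variable {m n K : Type*}

theorem inv_add_inv_inv [Fintype n] [DecidableEq n] [CommRing K] {A B : Matrix n n K}
    (hA : IsUnit A) (hB : IsUnit B) (hAB : IsUnit (A + B)) : (A⁻¹ + B⁻¹)⁻¹ = A - A * (A + B)⁻¹ * A := by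
  rw [isUnit_iff_isUnit_det] at hA hB hAB
  have hA' : A⁻¹ * A = 1 := nonsing_inv_mul A hA
  have hB' : B * B⁻¹ = 1 := mul_nonsing_inv B hB
  have hAB' : (A + B) * (A + B)⁻¹ = 1 := mul_nonsing_inv _ hAB
  have hfactor : A⁻¹ + B⁻¹ = A⁻¹ * (A + B) * B⁻¹ := by
    rw [mul_add, hA', add_mul, one_mul, mul_assoc, hB', mul_one, add_comm]
  calc (A⁻¹ + B⁻¹)⁻¹ = B * (A + B)⁻¹ * A := by
        rw [hfactor, mul_inv_rev, mul_inv_rev, nonsing_inv_nonsing_inv _ hA,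
          nonsing_inv_nonsing_inv _ hB, mul_assoc]
    _ = ((A + B) - A) * (A + B)⁻¹ * A := by rw [add_sub_cancel_left]
    _ = A - A * (A + B)⁻¹ * A := by rw [sub_mul, hAB', sub_mul, one_mul]

variable [Field K] [PartialOrder K] [StarRing K] [StarOrderedRing K]

theorem PosDef.smul_add_smul {M₁ M₂ : Matrix n n K} (h₁ : M₁.PosDef) (h₂ : M₂.PosDef) {a b : K}
    (ha : 0 ≤ a) (hb : 0 ≤ b) (hab : a + b = 1) : (a • M₁ + b • M₂).PosDef := by
  rcases ha.eq_or_lt with rfl | ha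
  · rw [zero_add] at hab
    simpa [hab] using h₂
  · exact (h₁.smul ha).add_posSemidef (h₂.posSemidef.smul hb)

variable [Fintype m] [Fintype n] [DecidableEq n]

theorem PosSemidef.fromBlocks_conjTranspose_mul_inv_mul {M : Matrix n n K} (hM : M.PosDef)
    (X : Matrix n m K) : (fromBlocks M X Xᴴ (Xᴴ * M⁻¹ * X)).PosSemidef := by
  have := hM.isUnit.invertible
  rw [PosDef.fromBlocks₁₁ _ _ hM, sub_self]
  exact .zero

theorem jointlyConvex_conjTranspose_mul_inv_mul {M₁ M₂ : Matrix n n K} (h₁ : M₁.PosDef)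
    (h₂ : M₂.PosDef) (X₁ X₂ : Matrix n m K) {a b : K} (ha : 0 ≤ a) (hb : 0 ≤ b)
    (hab : a + b = 1) :
    (a • (X₁ᴴ * M₁⁻¹ * X₁) + b • (X₂ᴴ * M₂⁻¹ * X₂) -
      (a • X₁ + b • X₂)ᴴ * (a • M₁ + b • M₂)⁻¹ * (a • X₁ + b • X₂)).PosSemidef := by
  have hM := h₁.smul_add_smul h₂ ha hb hab
  have := hM.isUnit.invertible
  have hsum := ((PosSemidef.fromBlocks_conjTranspose_mul_inv_mul h₁ X₁).smul ha).add
    ((PosSemidef.fromBlocks_conjTranspose_mul_inv_mul h₂ X₂).smul hb)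
  have hstar : a • X₁ᴴ + b • X₂ᴴ = (a • X₁ + b • X₂)ᴴ := by
    rw [conjTranspose_add, conjTranspose_smul, conjTranspose_smul,
      (IsSelfAdjoint.of_nonneg ha).star_eq, (IsSelfAdjoint.of_nonneg hb).star_eq]
  rw [fromBlocks_smul, fromBlocks_smul, fromBlocks_add, hstar] at hsum
  exact (PosDef.fromBlocks₁₁ _ _ hM).1 hsum

end Matrix

theorem harmMean_eq {n : Type*} [Fintype n] [DecidableEq n] {A B : Matrix n n ℂ} (hA : A.PosDef)
    (hB : B.PosDef) : harmMean A B = (2 : ℂ) • (A - A * (A + B)⁻¹ * A) := by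
  rw [harmMean, inv_add_inv_inv hA.isUnit hB.isUnit (hA.add hB).isUnit]

/-- Joint concavity of the harmonic mean. -/
theorem harmMean_concave {n : Type*} [Fintype n] [DecidableEq n]
    (A₁ A₂ B₁ B₂ : Matrix n n ℂ)
    (hA₁ : A₁.PosDef) (hA₂ : A₂.PosDef) (hB₁ : B₁.PosDef) (hB₂ : B₂.PosDef)
    (l : ℝ) (hl0 : 0 ≤ l) (hl1 : l ≤ 1) :
    (harmMean ((l : ℂ) • A₁ + (1 - (l : ℂ)) • A₂) ((l : ℂ) • B₁ + (1 - (l : ℂ)) • B₂) -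
      ((l : ℂ) • harmMean A₁ B₁ + (1 - (l : ℂ)) • harmMean A₂ B₂)).PosSemidef := by
  have ha : 0 ≤ (l : ℂ) := by exact_mod_cast hl0
  have hb : 0 ≤ 1 - (l : ℂ) := sub_nonneg.2 (by exact_mod_cast hl1)
  have hab : (l : ℂ) + (1 - l) = 1 := add_sub_cancel _ _
  have hA := hA₁.smul_add_smul hA₂ ha hb hab
  have hB := hB₁.smul_add_smul hB₂ ha hb hab
  have hconv := jointlyConvex_conjTranspose_mul_inv_mul (hA₁.add hB₁) (hA₂.add hB₂) A₁ A₂ ha hb hab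
  rw [hA.isHermitian.eq, hA₁.isHermitian.eq, hA₂.isHermitian.eq] at hconv
  rw [harmMean_eq hA hB, harmMean_eq hA₁ hB₁, harmMean_eq hA₂ hB₂,
    show (l : ℂ) • A₁ + (1 - (l : ℂ)) • A₂ + ((l : ℂ) • B₁ + (1 - (l : ℂ)) • B₂) =
      (l : ℂ) • (A₁ + B₁) + (1 - (l : ℂ)) • (A₂ + B₂) by module]
  convert hconv.smul (zero_le_two (α := ℂ)) using 1
  · rfl -- the `Ring ℂ` instance reached through `Field ℂ`
  · module
end
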